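/- Let X₁,...,Xₙ be independent with Xᵢ ~ EG₂(θ, φ, αᵢ) and X₁*,...,Xₙ* independent with Xᵢ* ~ EG₂(θ, φ, αᵢ*), all with common θ, φ > 0. If (α₁,...,αₙ) majorizes (α₁*,...,αₙ*), then max(X₁,...,Xₙ) ≥_rf max(X₁*,...,Xₙ*): for every x > 0, the reversed failure rate of the maximum for the α-parameters is at least that for the α*-parameters, i.e., θφx^(-φ-1)e^(-θx^(-φ)) Σᵢ αᵢ(1-e^(-θx^(-φ)))^(αᵢ-1)/(1-(1-e^(-θx^(-φ)))^(αᵢ)) ≥ θφx^(-φ-1)e^(-θx^(-φ)) Σᵢ αᵢ*(1-e^(-θx^(-φ)))^(αᵢ*-1)/(1-(1-e^(-θx^(-φ)))^(αᵢ*)). -/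

import Mathlib

/-!
With `u = 1 - exp (-θ x^(-φ)) ∈ (0, 1)` each summand is `g a = a u^(a-1) / (1 - u^a)`, and the
substitution `s = -a log u` turns `g` into a positive multiple of `s / (exp s - 1)`, which is
convex on `(0, ∞)`. The theorem is therefore Karamata's inequality for `g`. Karamata's inequality
is proved by sorting both vectors, bounding `f (a i) - f (b i)` below by the tangent line at
`b i`, and summing by parts against the tail sums of `a - b`, which majorization makes
nonnegative.
-/

/-- `Majorizes a b` : the vector `a` majorizes the vector `b`. -/
def Majorizes {n : ℕ} (a b : Fin n → ℝ) : Prop :=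
  (∀ s : Finset (Fin n), ∃ t : Finset (Fin n), t.card = s.card ∧ ∑ i ∈ s, b i ≤ ∑ i ∈ t, a i) ∧
    ∑ i, a i = ∑ i, b i

section Convexity

open Real Set

lemma nonneg_of_hasDerivAt_nonneg {f f' : ℝ → ℝ} (hf : ∀ x, HasDerivAt f (f' x) x)
    (h₀ : 0 ≤ f 0) (hf' : ∀ x, 0 < x → 0 ≤ f' x) {x : ℝ} (hx : 0 ≤ x) : 0 ≤ f x := by
  have hmono : MonotoneOn f (Ici 0) :=
    monotoneOn_of_hasDerivWithinAt_nonneg (convex_Ici 0)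
      (fun y _ ↦ (hf y).continuousAt.continuousWithinAt)
      (fun y _ ↦ (hf y).hasDerivWithinAt) (fun y hy ↦ hf' y (by simpa using hy))
  exact h₀.trans (hmono self_mem_Ici hx hx)

lemma one_add_sub_one_mul_exp_nonneg {s : ℝ} (hs : 0 ≤ s) : 0 ≤ 1 + (s - 1) * exp s :=
  nonneg_of_hasDerivAt_nonneg (f := fun s ↦ 1 + (s - 1) * exp s) (f' := fun s ↦ s * exp s)
    (fun s ↦ ((((hasDerivAt_id' s).sub_const 1).mul (hasDerivAt_exp s)).const_add 1).congr_deriv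
      (by ring))
    (by simp) (fun s hs ↦ by positivity) hs

lemma two_add_add_sub_two_mul_exp_nonneg {s : ℝ} (hs : 0 ≤ s) :
    0 ≤ 2 + s + (s - 2) * exp s :=
  nonneg_of_hasDerivAt_nonneg (f := fun s ↦ 2 + s + (s - 2) * exp s)
    (f' := fun s ↦ 1 + (s - 1) * exp s)
    (fun s ↦ (((hasDerivAt_id' s).const_add 2).add
      (((hasDerivAt_id' s).sub_const 2).mul (hasDerivAt_exp s))).congr_deriv (by ring))
    (by simp) (fun s hs ↦ one_add_sub_one_mul_exp_nonneg hs.le) hs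

lemma convexOn_div_exp_sub_one : ConvexOn ℝ (Ioi 0) fun s ↦ s / (exp s - 1) := by
  have hD : ∀ s : ℝ, 0 < s → 0 < exp s - 1 := fun s hs ↦ by
    linarith [add_one_lt_exp hs.ne']
  have hf' : ∀ s : ℝ, 0 < s → HasDerivAt (fun s ↦ s / (exp s - 1))
      ((exp s - 1 - s * exp s) / (exp s - 1) ^ 2) s := fun s hs ↦
    ((hasDerivAt_id' s).div ((hasDerivAt_exp s).sub_const 1) (hD s hs).ne').congr_deriv
      (by ring)
  have hf'' : ∀ s : ℝ, 0 < s → HasDerivAt (fun s ↦ (exp s - 1 - s * exp s) / (exp s - 1) ^ 2)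
      (exp s * (2 + s + (s - 2) * exp s) / (exp s - 1) ^ 3) s := fun s hs ↦
    ((((hasDerivAt_exp s).sub_const 1).sub ((hasDerivAt_id' s).mul (hasDerivAt_exp s))).div
      (((hasDerivAt_exp s).sub_const 1).pow 2) (pow_ne_zero 2 (hD s hs).ne')).congr_deriv (by
        simp only [Pi.pow_apply, Pi.sub_apply, Pi.mul_apply]
        field_simp [(hD s hs).ne']
        push_cast
        ring)
  refine convexOn_of_hasDerivWithinAt2_nonneg (convex_Ioi 0)
    (fun s hs ↦ (hf' s hs).continuousAt.continuousWithinAt)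
    (fun s hs ↦ (hf' s (by simpa using hs)).hasDerivWithinAt)
    (fun s hs ↦ (hf'' s (by simpa using hs)).hasDerivWithinAt) fun s hs ↦ ?_
  rw [interior_Ioi] at hs
  have := hD s hs
  have := two_add_add_sub_two_mul_exp_nonneg hs.le
  positivity

lemma mul_rpow_sub_one_div_eq {u a : ℝ} (hu0 : 0 < u) (hu1 : u < 1) (ha : 0 < a) :
    a * u ^ (a - 1) / (1 - u ^ a) = (u * -log u)⁻¹ * (-log u * a / (exp (-log u * a) - 1)) := by
  have hlog : log u < 0 := log_neg hu0 hu1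
  have hua : u ^ a < 1 := rpow_lt_one hu0.le hu1 ha
  have hexp : exp (-log u * a) = (u ^ a)⁻¹ := by
    rw [← rpow_neg hu0.le, rpow_def_of_pos hu0]
    ring_nf
  have : 0 < u ^ a := rpow_pos_of_pos hu0 a
  rw [hexp, rpow_sub_one hu0.ne']
  field_simp [hlog.ne, (sub_pos.2 hua).ne']

lemma convexOn_mul_rpow_sub_one_div {u : ℝ} (hu0 : 0 < u) (hu1 : u < 1) :
    ConvexOn ℝ (Ioi 0) fun a ↦ a * u ^ (a - 1) / (1 - u ^ a) := by
  have hL : 0 < -log u := neg_pos.2 (log_neg hu0 hu1)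
  have hcomp := convexOn_div_exp_sub_one.comp_linearMap (LinearMap.mulLeft ℝ (-log u))
  have hpre : LinearMap.mulLeft ℝ (-log u) ⁻¹' Ioi 0 = Ioi 0 :=
    (preimage_const_mul_Ioi₀ 0 hL).trans (by rw [zero_div])
  rw [hpre] at hcomp
  exact (hcomp.smul (inv_nonneg.2 (mul_pos hu0 hL).le)).congr fun a ha ↦
    (mul_rpow_sub_one_div_eq hu0 hu1 ha).symm

end Convexity

section Karamata

open Finset

theorem Monotone.sum_le_sum_of_isUpperSet {ι M : Type*} [LinearOrder ι] [AddCommMonoid M]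
    [LinearOrder M] [IsOrderedCancelAddMonoid M] {a : ι → M} (ha : Monotone a)
    {s t : Finset ι} (hs : IsUpperSet (s : Set ι)) (hst : #t = #s) :
    ∑ i ∈ t, a i ≤ ∑ i ∈ s, a i := by
  rw [← sum_sdiff_le_sum_sdiff]
  have hle : ∀ x ∈ t \ s, ∀ y ∈ s \ t, a x ≤ a y := fun x hx y hy ↦
    ha <| le_of_not_ge fun hyx ↦ (mem_sdiff.1 hx).2 (hs hyx (mem_sdiff.1 hy).1)
  rcases (t \ s).eq_empty_or_nonempty with hts | hne
  · have hst' : s \ t = ∅ := by rw [← card_eq_zero, ← card_sdiff_comm hst, hts, card_empty]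
    rw [hts, hst']
  obtain ⟨x, hx, hmax⟩ := exists_max_image _ a hne
  calc ∑ i ∈ t \ s, a i ≤ #(t \ s) • a x := sum_le_card_nsmul _ _ _ hmax
    _ = #(s \ t) • a x := by rw [card_sdiff_comm hst]
    _ ≤ ∑ i ∈ s \ t, a i := card_nsmul_le_sum _ _ _ (hle x hx)

variable {n : ℕ}

theorem Majorizes.comp_perm {a b : Fin n → ℝ} (h : Majorizes a b) (σ τ : Equiv.Perm (Fin n)) :
    Majorizes (a ∘ σ) (b ∘ τ) := by
  refine ⟨fun s ↦ ?_, by simpa [Equiv.sum_comp] using h.2⟩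
  obtain ⟨t, hcard, hle⟩ := h.1 (s.map τ.toEmbedding)
  refine ⟨t.map σ.symm.toEmbedding, by simpa using hcard, ?_⟩
  simpa [sum_map] using hle

theorem Majorizes.sum_tail_le {a b : Fin n → ℝ} (h : Majorizes a b) (ha : Monotone a) (k : ℕ) :
    ∑ i : Fin n with k ≤ i.val, b i ≤ ∑ i : Fin n with k ≤ i.val, a i := by
  obtain ⟨t, hcard, hle⟩ := h.1 {i | k ≤ i.val}
  refine hle.trans (ha.sum_le_sum_of_isUpperSet (fun i j hij hi ↦ ?_) hcard)
  simp only [coe_filter, mem_univ, true_and, Set.mem_ofPred_eq] at hi ⊢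
  exact hi.trans hij

lemma Fin.sum_filter_succ_le_val {M : Type*} [AddCommMonoid M] (d : Fin (n + 1) → M) (k : ℕ) :
    ∑ i : Fin (n + 1) with k + 1 ≤ i.val, d i = ∑ i : Fin n with k ≤ i.val, d i.succ := by
  simp [sum_filter, Fin.sum_univ_succ]

theorem sum_mul_nonneg_of_monotone_of_tail_nonneg {c d : Fin n → ℝ} (hc : Monotone c)
    (hc₀ : ∀ i, 0 ≤ c i) (hd : ∀ k : ℕ, 0 ≤ ∑ i : Fin n with k ≤ i.val, d i) :
    0 ≤ ∑ i, c i * d i := by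
  induction n with
  | zero => simp
  | succ n ih =>
    have htotal : 0 ≤ ∑ i, d i := by simpa using hd 0
    have htail : 0 ≤ ∑ i : Fin n, (c i.succ - c 0) * d i.succ :=
      ih (fun i j hij ↦ sub_le_sub_right (hc (Fin.succ_le_succ_iff.2 hij)) _)
        (fun i ↦ sub_nonneg.2 (hc (Fin.zero_le _))) fun k ↦ by
          rw [← Fin.sum_filter_succ_le_val]; exact hd (k + 1)
    have hsplit : ∑ i, c i * d i = c 0 * ∑ i, d i + ∑ i : Fin n, (c i.succ - c 0) * d i.succ := by
      simp only [Fin.sum_univ_succ, sub_mul, sum_sub_distrib, ← mul_sum]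
      ring
    rw [hsplit]
    exact add_nonneg (mul_nonneg (hc₀ 0) htotal) htail

theorem sum_mul_nonneg_of_monotone_of_tail_nonneg_of_sum_eq_zero {c d : Fin n → ℝ}
    (hc : Monotone c) (hd : ∀ k : ℕ, 0 ≤ ∑ i : Fin n with k ≤ i.val, d i) (hsum : ∑ i, d i = 0) :
    0 ≤ ∑ i, c i * d i := by
  cases n with
  | zero => simp
  | succ n =>
    have := sum_mul_nonneg_of_monotone_of_tail_nonneg (c := fun i ↦ c i - c 0)
      (fun i j hij ↦ sub_le_sub_right (hc hij) _) (fun i ↦ sub_nonneg.2 (hc (Fin.zero_le _))) hd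
    simpa [sub_mul, sum_sub_distrib, ← mul_sum, hsum] using this

theorem ConvexOn.add_rightDeriv_mul_sub_le {S : Set ℝ} {f : ℝ → ℝ} (hf : ConvexOn ℝ S f)
    {x y : ℝ} (hx : x ∈ interior S) (hy : y ∈ S) :
    f x + derivWithin f (Set.Ioi x) x * (y - x) ≤ f y := by
  rcases lt_trichotomy x y with hxy | rfl | hyx
  · have := hf.rightDeriv_le_slope_of_mem_interior hx hy hxy
    rw [slope_def_field, le_div_iff₀ (sub_pos.2 hxy)] at this
    linarith
  · simp
  · have := (hf.slope_le_leftDeriv_of_mem_interior hy hx hyx).trans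
      (hf.leftDeriv_le_rightDeriv_of_mem_interior hx)
    rw [slope_def_field, div_le_iff₀ (sub_pos.2 hyx)] at this
    linarith

theorem ConvexOn.sum_le_sum_of_tail_sum_le {S : Set ℝ} {f : ℝ → ℝ} (hf : ConvexOn ℝ S f)
    {a b : Fin n → ℝ} (ha : ∀ i, a i ∈ S) (hb : ∀ i, b i ∈ interior S) (hbm : Monotone b)
    (htail : ∀ k : ℕ, ∑ i : Fin n with k ≤ i.val, b i ≤ ∑ i : Fin n with k ≤ i.val, a i)
    (hsum : ∑ i, a i = ∑ i, b i) :
    ∑ i, f (b i) ≤ ∑ i, f (a i) := by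
  have habel : 0 ≤ ∑ i, derivWithin f (Set.Ioi (b i)) (b i) * (a i - b i) :=
    sum_mul_nonneg_of_monotone_of_tail_nonneg_of_sum_eq_zero
      (fun i j hij ↦ hf.monotoneOn_rightDeriv (hb i) (hb j) (hbm hij))
      (fun k ↦ by rw [sum_sub_distrib, sub_nonneg]; exact htail k)
      (by rw [sum_sub_distrib, hsum, sub_self])
  have htangent : ∀ i, derivWithin f (Set.Ioi (b i)) (b i) * (a i - b i) ≤ f (a i) - f (b i) :=
    fun i ↦ by linarith [hf.add_rightDeriv_mul_sub_le (hb i) (ha i)]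
  rw [← sub_nonneg, ← sum_sub_distrib]
  exact habel.trans (sum_le_sum fun i _ ↦ htangent i)

theorem ConvexOn.sum_le_sum_of_majorizes {S : Set ℝ} {f : ℝ → ℝ} (hf : ConvexOn ℝ S f)
    {a b : Fin n → ℝ} (ha : ∀ i, a i ∈ S) (hb : ∀ i, b i ∈ interior S) (h : Majorizes a b) :
    ∑ i, f (b i) ≤ ∑ i, f (a i) := by
  have hsorted := h.comp_perm (Tuple.sort a) (Tuple.sort b)
  have := hf.sum_le_sum_of_tail_sum_le (fun i ↦ ha _) (fun i ↦ hb _) (Tuple.monotone_sort b)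
    (hsorted.sum_tail_le (Tuple.monotone_sort a)) hsorted.2
  simpa only [Function.comp_apply, Equiv.sum_comp (Tuple.sort a) fun i ↦ f (a i),
    Equiv.sum_comp (Tuple.sort b) fun i ↦ f (b i)] using this

end Karamata

theorem max_reversed_failure_rate_order (n : ℕ) (θ φ : ℝ) (hθ : 0 < θ) (hφ : 0 < φ)
    (α α' : Fin n → ℝ) (hα : ∀ i, 0 < α i) (hα' : ∀ i, 0 < α' i)
    (hmaj : Majorizes α α') :
    ∀ x : ℝ, 0 < x →
      θ * φ * x ^ (-φ - 1) * Real.exp (-θ * x ^ (-φ)) *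
          ∑ i, α' i * (1 - Real.exp (-θ * x ^ (-φ))) ^ (α' i - 1) /
            (1 - (1 - Real.exp (-θ * x ^ (-φ))) ^ (α' i)) ≤
        θ * φ * x ^ (-φ - 1) * Real.exp (-θ * x ^ (-φ)) *
          ∑ i, α i * (1 - Real.exp (-θ * x ^ (-φ))) ^ (α i - 1) /
            (1 - (1 - Real.exp (-θ * x ^ (-φ))) ^ (α i)) := by
  intro x hx
  have hu0 : 0 < 1 - Real.exp (-θ * x ^ (-φ)) := by
    have : 0 < θ * x ^ (-φ) := mul_pos hθ (Real.rpow_pos_of_pos hx _)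
    simpa [neg_mul] using this
  have hu1 : 1 - Real.exp (-θ * x ^ (-φ)) < 1 := sub_lt_self _ (Real.exp_pos _)
  refine mul_le_mul_of_nonneg_left ?_ (by positivity)
  exact (convexOn_mul_rpow_sub_one_div hu0 hu1).sum_le_sum_of_majorizes hα
    (fun i ↦ by rw [interior_Ioi]; exact hα' i) hmaj
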